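/- One-dimensional counterexample, supersolution part: The continuous function v(x) = −√(1 − x²) on [0,1] is a viscosity supersolution of the generalized Dirichlet problem for the prescribed Gaussian curvature equation −u'' + (1 + (u')²)^{3/2} = 0 on (0,1) with boundary conditions u(0) = −1, u(1) = 1. -/

import Mathlib

open scoped Classical

/-- Lower envelope `F_*` of the generalized Dirichlet operator for the prescribed
Gaussian curvature equation `-u'' + (1 + (u')²)^{3/2} = 0` on `(0,1)` with boundary
conditions `u(0) = -1`, `u(1) = 1`. -/
noncomputable def GCLower (x u p X : ℝ) : ℝ :=
  if x ∈ Set.Ioo (0:ℝ) 1 then -X + (1 + p ^ 2) ^ ((3:ℝ)/2)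
  else if x = 0 then min (u + 1) (-X + (1 + p ^ 2) ^ ((3:ℝ)/2))
  else min (u - 1) (-X + (1 + p ^ 2) ^ ((3:ℝ)/2))

/-- Upper envelope `F^*` of the generalized Dirichlet operator for the prescribed
Gaussian curvature equation on `(0,1)` with boundary conditions `u(0) = -1`, `u(1) = 1`. -/
noncomputable def GCUpper (x u p X : ℝ) : ℝ :=
  if x ∈ Set.Ioo (0:ℝ) 1 then -X + (1 + p ^ 2) ^ ((3:ℝ)/2)
  else if x = 0 then max (u + 1) (-X + (1 + p ^ 2) ^ ((3:ℝ)/2))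
  else max (u - 1) (-X + (1 + p ^ 2) ^ ((3:ℝ)/2))

/-- Viscosity subsolution of the generalized Dirichlet problem for the prescribed
Gaussian curvature equation on `[0,1]`. -/
def IsGCSubsolution (u : ℝ → ℝ) : Prop :=
  UpperSemicontinuousOn u (Set.Icc 0 1) ∧
  ∀ φ : ℝ → ℝ, ContDiff ℝ 2 φ → ∀ x₀ ∈ Set.Icc (0:ℝ) 1,
    IsLocalMaxOn (fun x => u x - φ x) (Set.Icc 0 1) x₀ →
      GCLower x₀ (u x₀) (deriv φ x₀) (deriv (deriv φ) x₀) ≤ 0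

/-- Viscosity supersolution of the generalized Dirichlet problem for the prescribed
Gaussian curvature equation on `[0,1]`. -/
def IsGCSupersolution (w : ℝ → ℝ) : Prop :=
  LowerSemicontinuousOn w (Set.Icc 0 1) ∧
  ∀ φ : ℝ → ℝ, ContDiff ℝ 2 φ → ∀ x₀ ∈ Set.Icc (0:ℝ) 1,
    IsLocalMinOn (fun x => w x - φ x) (Set.Icc 0 1) x₀ →
      0 ≤ GCUpper x₀ (w x₀) (deriv φ x₀) (deriv (deriv φ) x₀)


open Filter Set

/-- Second-order necessary condition at an (unconstrained) local minimum. -/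
lemma second_order_min {g g' : ℝ → ℝ} {a D : ℝ} (hmin : IsLocalMin g a)
    (hg : ∀ᶠ x in nhds a, HasDerivAt g (g' x) x)
    (h0 : g' a = 0) (hD : HasDerivAt g' D a) : 0 ≤ D := by
  by_contra hcon
  push_neg at hcon
  have hs : Tendsto (slope g' a) (nhdsWithin a (Ioi a)) (nhds D) :=
    (hasDerivAt_iff_tendsto_slope.1 hD).mono_left
      (nhdsWithin_mono _ (fun x hx => ne_of_gt hx))
  have e1 : ∀ᶠ x in nhdsWithin a (Ioi a), slope g' a x < 0 :=
    hs.eventually (Iio_mem_nhds hcon)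
  have e1' : ∀ᶠ x in nhdsWithin a (Ioi a), g' x < 0 := by
    filter_upwards [e1, self_mem_nhdsWithin] with x hx hx'
    have hxa : (0:ℝ) < x - a := sub_pos.2 hx'
    rw [slope_def_field, h0, sub_zero] at hx
    rcases div_neg_iff.mp hx with ⟨_, h2⟩ | ⟨hlt, _⟩
    · linarith
    · exact hlt
  obtain ⟨u, hu, hIoc⟩ := mem_nhdsGT_iff_exists_Ioc_subset.mp e1'
  obtain ⟨ε₁, hε₁, hball₁⟩ := Metric.eventually_nhds_iff.mp hg
  obtain ⟨ε₂, hε₂, hball₂⟩ := Metric.eventually_nhds_iff.mp hmin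
  set b := min u (a + min ε₁ ε₂ / 2) with hbdef
  have hab : a < b := lt_min hu (lt_add_of_pos_right a (half_pos (lt_min hε₁ hε₂)))
  have hmem : ∀ x ∈ Icc a b, dist x a < min ε₁ ε₂ := by
    intro x hx
    rw [Real.dist_eq, abs_of_nonneg (by linarith [hx.1])]
    have : b ≤ a + min ε₁ ε₂ / 2 := min_le_right _ _
    have h2 : 0 < min ε₁ ε₂ := lt_min hε₁ hε₂
    linarith [hx.2]
  have hanti : StrictAntiOn g (Icc a b) := by
    apply strictAntiOn_of_deriv_neg (convex_Icc a b)
    · intro x hx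
      exact (hball₁ (lt_of_lt_of_le (hmem x hx) (min_le_left _ _))).continuousAt.continuousWithinAt
    · intro x hx
      rw [interior_Icc] at hx
      rw [(hball₁ (lt_of_lt_of_le (hmem x ⟨hx.1.le, hx.2.le⟩) (min_le_left _ _))).deriv]
      exact hIoc ⟨hx.1, le_trans hx.2.le (min_le_left _ _)⟩
  have hlt : g b < g a :=
    hanti (left_mem_Icc.2 hab.le) (right_mem_Icc.2 hab.le) hab
  have hge : g a ≤ g b :=
    hball₂ (lt_of_lt_of_le (hmem b (right_mem_Icc.2 hab.le)) (min_le_right _ _))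
  linarith

/-- **One-dimensional counterexample, supersolution part**: the continuous function
`v(x) = -√(1 - x²)` on `[0,1]` is a viscosity supersolution of the generalized
Dirichlet problem for the prescribed Gaussian curvature equation. -/
theorem gaussian_curvature_supersolution :
    IsGCSupersolution (fun x : ℝ => -Real.sqrt (1 - x ^ 2)) := by
  have hvc : Continuous (fun x : ℝ => -Real.sqrt (1 - x ^ 2)) :=
    (Real.continuous_sqrt.comp (by continuity)).neg
  constructor
  · exact hvc.lowerSemicontinuous.lowerSemicontinuousOn _
  intro φ hφ x₀ hx₀ hmin
  have hφd : Differentiable ℝ φ := hφ.differentiable (by norm_num)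
  have hφ2 : Differentiable ℝ (deriv φ) := by
    have h2 : ContDiff ℝ (1+1) φ := by exact_mod_cast hφ
    exact (contDiff_succ_iff_deriv.mp h2).2.2.differentiable (by norm_num)
  obtain ⟨hx0, hx1⟩ := hx₀
  rcases hx0.eq_or_lt with h0 | h0
  · -- x₀ = 0 : boundary term u + 1 = 0
    subst h0
    simp only [GCUpper, Set.mem_Ioo, lt_irrefl, false_and, if_false, if_pos rfl]
    have : -Real.sqrt (1 - (0:ℝ) ^ 2) + 1 = 0 := by norm_num
    exact le_max_of_le_left (le_of_eq this.symm)
  rcases hx1.eq_or_lt with h1 | h1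
  · -- x₀ = 1 : no test function can touch from below
    exfalso
    subst h1
    have hd1 : HasDerivAt φ (deriv φ 1) 1 := (hφd 1).hasDerivAt
    set F := nhdsWithin (1:ℝ) (Ico (0:ℝ) 1) with hF
    have hFne : F.NeBot := by
      refine mem_closure_iff_nhdsWithin_neBot.mp ?_
      rw [closure_Ico (by norm_num : (0:ℝ) ≠ 1)]
      exact ⟨zero_le_one, le_refl 1⟩
    have hFle : F ≤ nhdsWithin 1 {(1:ℝ)}ᶜ :=
      nhdsWithin_mono _ (fun x hx => ne_of_lt hx.2)
    have hslope : Tendsto (slope φ 1) F (nhds (deriv φ 1)) :=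
      (hasDerivAt_iff_tendsto_slope.1 hd1).mono_left hFle
    set M := deriv φ 1 + 1 with hM
    have e1 : ∀ᶠ x in F, slope φ 1 x < M := hslope.eventually (Iio_mem_nhds (lt_add_one _))
    have e2 : ∀ᶠ x in F, -Real.sqrt (1 - (1:ℝ) ^ 2) - φ 1 ≤ -Real.sqrt (1 - x ^ 2) - φ x :=
      hmin.filter_mono (nhdsWithin_mono _ Ico_subset_Icc_self)
    have e3 : ∀ᶠ x in F, x ∈ Ico (0:ℝ) 1 := self_mem_nhdsWithin
    have hto1 : Tendsto (fun x : ℝ => (1:ℝ) - x) F (nhds 0) := by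
      have hc : Continuous (fun x : ℝ => (1:ℝ) - x) := continuous_const.sub continuous_id
      have h := (hc.tendsto (1:ℝ)).mono_left (nhdsWithin_le_nhds : F ≤ nhds 1)
      simpa only [sub_self] using h
    have hxto : Tendsto (fun x : ℝ => Real.sqrt (1 - x)) F (nhds 0) := by
      have h := (Real.continuous_sqrt.tendsto 0).comp hto1
      simpa [Function.comp_def] using h
    have e4 : ∀ᶠ x in F, Real.sqrt (1 - x) < (|M| + 1)⁻¹ :=
      hxto.eventually (Iio_mem_nhds (by positivity))
    obtain ⟨x, h1x, h2x, h3x, h4x⟩ := (e1.and (e2.and (e3.and e4))).exists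
    obtain ⟨hx0', hx1'⟩ := h3x
    have hs1 : 0 < Real.sqrt (1 - x) := Real.sqrt_pos.2 (by linarith)
    have hs2 : 1 ≤ Real.sqrt (1 + x) := by
      have := Real.sqrt_le_sqrt (show (1:ℝ) ≤ 1 + x by linarith)
      simpa using this
    have key : Real.sqrt (1 - x ^ 2) = Real.sqrt (1 - x) * Real.sqrt (1 + x) := by
      rw [← Real.sqrt_mul (by linarith : (0:ℝ) ≤ 1 - x)]
      ring_nf
    rw [slope_def_field] at h1x
    have hxm1 : x - 1 < 0 := by linarith
    have hA : M * (x - 1) < φ x - φ 1 := (div_lt_iff_of_neg hxm1).mp h1x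
    have h2x' : φ x - φ 1 ≤ -Real.sqrt (1 - x ^ 2) := by
      have h00 : Real.sqrt (1 - (1:ℝ) ^ 2) = 0 := by norm_num
      rw [h00] at h2x
      linarith
    have hB : Real.sqrt (1 - x ^ 2) < M * (1 - x) := by nlinarith
    rw [key] at hB
    have hsq : Real.sqrt (1 - x) ^ 2 = 1 - x := Real.sq_sqrt (by linarith)
    have hMabs : M ≤ |M| := le_abs_self M
    have habs : (0:ℝ) ≤ |M| := abs_nonneg M
    have hB' : Real.sqrt (1 - x) * Real.sqrt (1 + x) < M * Real.sqrt (1 - x) ^ 2 := by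
      rw [hsq]; exact hB
    have hpos : (0:ℝ) < |M| + 1 := by positivity
    have p4 : Real.sqrt (1 - x) * (|M| + 1) < 1 := by
      have h := mul_lt_mul_of_pos_right h4x hpos
      rwa [inv_mul_cancel₀ (ne_of_gt hpos)] at h
    nlinarith [hB', hsq, mul_le_mul_of_nonneg_right hMabs (sq_nonneg (Real.sqrt (1 - x))),
      mul_le_mul_of_nonneg_left hs2 hs1.le,
      mul_lt_mul_of_pos_right p4 hs1, hs1, hx1']
  · -- interior case
    have hb : 0 < 1 - x₀ ^ 2 := by nlinarith
    have hsb : 0 < Real.sqrt (1 - x₀ ^ 2) := Real.sqrt_pos.2 hb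
    set V' : ℝ → ℝ := fun x => x / Real.sqrt (1 - x ^ 2) with hV'def
    have hsqrtd : ∀ x : ℝ, 0 < 1 - x ^ 2 →
        HasDerivAt (fun y : ℝ => Real.sqrt (1 - y ^ 2)) (-(x / Real.sqrt (1 - x ^ 2))) x := by
      intro x hbx
      have h1 : HasDerivAt (fun y : ℝ => 1 - y ^ 2) (-(2 * x)) x := by
        simpa using ((hasDerivAt_pow 2 x).const_sub 1)
      have h2 := (Real.hasDerivAt_sqrt (ne_of_gt hbx)).comp x h1
      refine h2.congr_deriv ?_
      have hne : Real.sqrt (1 - x ^ 2) ≠ 0 := ne_of_gt (Real.sqrt_pos.2 hbx)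
      field_simp
    have hder : ∀ x : ℝ, 0 < 1 - x ^ 2 →
        HasDerivAt (fun y : ℝ => -Real.sqrt (1 - y ^ 2)) (V' x) x := by
      intro x hbx
      have := (hsqrtd x hbx).neg
      rw [neg_neg] at this; exact this
    -- the set where 1 - x^2 > 0 is open and contains x₀
    have hopen : IsOpen {x : ℝ | 0 < 1 - x ^ 2} :=
      isOpen_lt continuous_const (by continuity)
    have hnb : {x : ℝ | 0 < 1 - x ^ 2} ∈ nhds x₀ := hopen.mem_nhds hb
    set g : ℝ → ℝ := fun x => -Real.sqrt (1 - x ^ 2) - φ x with hgdef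
    set g' : ℝ → ℝ := fun x => V' x - deriv φ x with hg'def
    have hgder : ∀ᶠ x in nhds x₀, HasDerivAt g (g' x) x := by
      filter_upwards [hnb] with x hx
      exact (hder x hx).sub (hφd x).hasDerivAt
    have hlocmin : IsLocalMin g x₀ := hmin.isLocalMin (Icc_mem_nhds h0 h1)
    have hfirst : g' x₀ = 0 :=
      hlocmin.hasDerivAt_eq_zero ((hder x₀ hb).sub (hφd x₀).hasDerivAt)
    have hpeq : deriv φ x₀ = V' x₀ := by
      have := hfirst
      simp only [hg'def] at this
      linarith
    -- second derivative of V'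
    set W : ℝ := 1 / ((1 - x₀ ^ 2) * Real.sqrt (1 - x₀ ^ 2)) with hW
    have hV'd : HasDerivAt V' W x₀ := by
      have hd := (hasDerivAt_id x₀).div (hsqrtd x₀ hb) (ne_of_gt hsb)
      refine hd.congr_deriv ?_
      have hne : Real.sqrt (1 - x₀ ^ 2) ≠ 0 := ne_of_gt hsb
      have hsq : Real.sqrt (1 - x₀ ^ 2) ^ 2 = 1 - x₀ ^ 2 := Real.sq_sqrt hb.le
      rw [hW]
      field_simp
      simp only [id_eq, hsq]
      ring
    have hg'd : HasDerivAt g' (W - deriv (deriv φ) x₀) x₀ :=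
      hV'd.sub (hφ2 x₀).hasDerivAt
    have hsecond : 0 ≤ W - deriv (deriv φ) x₀ :=
      second_order_min hlocmin hgder hfirst hg'd
    -- conclude
    have hmemIoo : x₀ ∈ Set.Ioo (0:ℝ) 1 := ⟨h0, h1⟩
    simp only [GCUpper, if_pos hmemIoo]
    have hval : (1 + deriv φ x₀ ^ 2) ^ ((3:ℝ)/2) = W := by
      rw [hpeq, hV'def]
      have hsq : Real.sqrt (1 - x₀ ^ 2) ^ 2 = 1 - x₀ ^ 2 := Real.sq_sqrt hb.le
      have h1p : 1 + (x₀ / Real.sqrt (1 - x₀ ^ 2)) ^ 2 = (1 - x₀ ^ 2)⁻¹ := by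
        rw [div_pow, hsq]
        field_simp
        ring
      rw [h1p, Real.inv_rpow hb.le, show (3:ℝ)/2 = 1 + 1/2 by norm_num,
        Real.rpow_add hb, Real.rpow_one, ← Real.sqrt_eq_rpow, hW, one_div]
    rw [hval]
    linarith
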